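/- Let λ ∈ ℝ and let (Y_j)_{j≥1} be i.i.d. real random variables with all moments finite. For all integers n ≥ k ≥ 0, the probabilistic degenerate Stirling numbers of the second kind admit the multinomial representation: {n \brace k}_{Y,λ} = (1/k!) Σ_{l₁+⋯+l_k = n, each lᵢ ≥ 1} C(n; l₁,…,l_k) E[∏_{i=1}^{k} (Y_i)_{l_i,λ}], where the sum is over all k-tuples (l₁,…,l_k) of positive integers with l₁+⋯+l_k = n and C(n; l₁,…,l_k) = n!/(l₁!⋯l_k!) is the multinomial coefficient. -/

import Mathlib

/-!
Let `e_λ^x(t) = ∑ₘ (x)_{m,λ} tᵐ / m!` be the degenerate exponential. The binomial identity for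
`(x + y)_{n,λ}` says `e_λ^{x+y} = e_λ^x e_λ^y`, so by independence and identical distribution
`E[e_λ^{S_j}] = F^j` coefficientwise, with `F = E[e_λ^Y]`. Hence the alternating sum defining
`k! {n \brace k}_{Y,λ}` is `n!` times the `tⁿ`-coefficient of `(F - 1)^k`. As `F - 1` has no
constant term, expanding `(F - 1)^k` as a product of `k` factors leaves only the tuples of
positive indices, each weighted by a multinomial coefficient.
-/

open MeasureTheory ProbabilityTheory Finset

/-- The degenerate falling factorial `(x)_{n,λ} = ∏_{i=0}^{n-1} (x - iλ)`. -/
noncomputable def degFall (lam x : ℝ) (n : ℕ) : ℝ :=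
  ∏ i ∈ Finset.range n, (x - (i : ℝ) * lam)

/-- The probabilistic degenerate Stirling numbers of the second kind associated with `Y`:
`{n \brace k}_{Y,λ} = (1/k!) ∑_{j=0}^{k} (-1)^{k-j} C(k,j) E[(S_j)_{n,λ}]`. -/
noncomputable def probDegStirling {Ω : Type*} [MeasurableSpace Ω] (μ : Measure Ω)
    (Y : ℕ → Ω → ℝ) (lam : ℝ) (n k : ℕ) : ℝ :=
  (1 / (Nat.factorial k : ℝ)) * ∑ j ∈ Finset.range (k + 1),
    (-1 : ℝ) ^ (k - j) * (Nat.choose k j : ℝ) *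
      ∫ ω, degFall lam (∑ i ∈ Finset.range j, Y i ω) n ∂μ

theorem sub_one_pow_eq_sum_smul {R A : Type*} [CommRing R] [CommRing A] [Algebra R A] (a : A)
    (k : ℕ) : (a - 1) ^ k = ∑ j ∈ range (k + 1), ((-1) ^ (k - j) * k.choose j : R) • a ^ j := by
  rw [sub_eq_add_neg, add_pow]
  refine sum_congr rfl fun j _ => ?_
  rw [Algebra.smul_def, map_mul, map_pow, map_neg, map_one, map_natCast]
  ring

namespace PowerSeries

variable {K : Type*} [Field K]

noncomputable def egf (a : ℕ → K) : K⟦X⟧ := mk fun m => a m / m.factorial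

theorem coeff_prod_eq_sum_piAntidiag {R ι : Type*} [CommSemiring R] [DecidableEq ι]
    (f : ι → R⟦X⟧) (d : ℕ) (s : Finset ι) :
    coeff d (∏ i ∈ s, f i) = ∑ t ∈ s.piAntidiag d, ∏ i ∈ s, coeff (t i) (f i) := by
  rw [coeff_prod, finsuppAntidiag, sum_map]
  exact sum_attach (s.piAntidiag d) fun t => ∏ i ∈ s, coeff (t i) (f i)

variable [CharZero K]

theorem factorial_mul_coeff_prod_egf {ι : Type*} [DecidableEq ι] (a : ι → ℕ → K)
    (s : Finset ι) (n : ℕ) :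
    n.factorial * coeff n (∏ i ∈ s, egf (a i)) =
      ∑ t ∈ s.piAntidiag n, Nat.multinomial s t * ∏ i ∈ s, a i (t i) := by
  rw [coeff_prod_eq_sum_piAntidiag, mul_sum]
  refine sum_congr rfl fun t ht => ?_
  obtain ⟨rfl, -⟩ := mem_piAntidiag.mp ht
  have hspec := Nat.multinomial_spec s t
  have hne : ∏ i ∈ s, ((t i).factorial : K) ≠ 0 :=
    prod_ne_zero_iff.mpr fun i _ => Nat.cast_ne_zero.mpr (Nat.factorial_ne_zero _)
  simp only [egf, coeff_mk, prod_div_distrib]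
  rw [← hspec]
  push_cast
  field_simp

theorem factorial_mul_coeff_egf_mul (a b : ℕ → K) (n : ℕ) :
    n.factorial * coeff n (egf a * egf b) =
      ∑ p ∈ antidiagonal n, n.choose p.1 * (a p.1 * b p.2) := by
  rw [coeff_mul, mul_sum]
  refine sum_congr rfl fun p hp => ?_
  obtain rfl := mem_antidiagonal.mp hp
  have hfac := Nat.add_choose_mul_factorial_mul_factorial p.1 p.2
  simp only [egf, coeff_mk]
  rw [← hfac, Nat.choose_symm_add]
  have h₁ : (p.1.factorial : K) ≠ 0 := Nat.cast_ne_zero.mpr (Nat.factorial_ne_zero _)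
  have h₂ : (p.2.factorial : K) ≠ 0 := Nat.cast_ne_zero.mpr (Nat.factorial_ne_zero _)
  push_cast
  field_simp

theorem factorial_mul_coeff_egf_sub_one_pow {a : ℕ → K} (ha : a 0 = 1) (k n : ℕ) :
    n.factorial * coeff n ((egf a - 1) ^ k) =
      ∑ t ∈ (Nat.antidiagonalTuple k n).filter (fun t => ∀ i, 0 < t i),
        Nat.multinomial univ t * ∏ i, a (t i) := by
  have hsub : egf a - 1 = egf fun m => if 0 < m then a m else 0 := by
    ext m
    rcases m.eq_zero_or_pos with rfl | hm
    · simp [egf, ha]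
    · simp [egf, hm, hm.ne']
  rw [hsub, ← Fin.prod_const, factorial_mul_coeff_prod_egf,
    ← piAntidiag_univ_fin_eq_antidiagonalTuple, sum_filter]
  refine sum_congr rfl fun t _ => ?_
  rw [Fintype.prod_ite_zero, mul_ite, mul_zero]
  congr

end PowerSeries

open PowerSeries

theorem degFall_succ (lam x : ℝ) (n : ℕ) :
    degFall lam x (n + 1) = degFall lam x n * (x - n * lam) :=
  prod_range_succ _ _

theorem measurable_degFall (lam : ℝ) (n : ℕ) : Measurable fun x => degFall lam x n :=
  Finset.measurable_prod _ fun _ _ => measurable_id.sub_const _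

theorem degFall_add (lam x y : ℝ) (n : ℕ) :
    degFall lam (x + y) n =
      ∑ p ∈ antidiagonal n, n.choose p.1 * (degFall lam x p.1 * degFall lam y p.2) := by
  induction n with
  | zero => simp [degFall]
  | succ n ih =>
    rw [degFall_succ, ih, sum_antidiagonal_choose_succ_mul
      (fun i j => degFall lam x i * degFall lam y j) n, sum_mul, ← sum_add_distrib]
    refine sum_congr rfl fun p hp => ?_
    obtain rfl := mem_antidiagonal.mp hp
    rw [degFall_succ, degFall_succ, Nat.choose_symm_add]
    push_cast
    ring

theorem egf_degFall_zero (lam : ℝ) : egf (degFall lam 0) = 1 := by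
  ext m
  rcases m.eq_zero_or_pos with rfl | hm
  · simp [egf, degFall]
  · simp [egf, degFall, hm.ne', prod_eq_zero (mem_range.mpr hm)]

theorem egf_degFall_add (lam x y : ℝ) :
    egf (degFall lam (x + y)) = egf (degFall lam x) * egf (degFall lam y) := by
  ext n
  have hn : (n.factorial : ℝ) ≠ 0 := by positivity
  refine mul_left_cancel₀ hn ?_
  rw [factorial_mul_coeff_egf_mul, ← degFall_add, egf, coeff_mk, mul_div_cancel₀ _ hn]

theorem egf_degFall_sum {ι : Type*} (lam : ℝ) (s : Finset ι) (x : ι → ℝ) :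
    egf (degFall lam (∑ i ∈ s, x i)) = ∏ i ∈ s, egf (degFall lam (x i)) := by
  classical
  induction s using Finset.induction_on with
  | empty => simp [egf_degFall_zero]
  | insert a s ha ih => rw [sum_insert ha, prod_insert ha, egf_degFall_add, ih]

theorem degFall_sum {ι : Type*} [DecidableEq ι] (lam : ℝ) (s : Finset ι) (x : ι → ℝ) (n : ℕ) :
    degFall lam (∑ i ∈ s, x i) n =
      ∑ t ∈ s.piAntidiag n, Nat.multinomial s t * ∏ i ∈ s, degFall lam (x i) (t i) := by
  have hn : (n.factorial : ℝ) ≠ 0 := by positivity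
  rw [← factorial_mul_coeff_prod_egf, ← egf_degFall_sum, egf, coeff_mk, mul_div_cancel₀ _ hn]

section Independence

variable {Ω ι 𝕜 : Type*} [MeasurableSpace Ω] {μ : Measure Ω} [RCLike 𝕜] {Z : ι → Ω → 𝕜}

theorem ProbabilityTheory.iIndepFun.integrable_fun_finsetProd
    (hZ : iIndepFun Z μ) (hint : ∀ i, Integrable (Z i) μ) (s : Finset ι) :
    Integrable (fun ω => ∏ i ∈ s, Z i ω) μ := by
  classical
  have := hZ.isProbabilityMeasure
  induction s using Finset.induction_on with
  | empty => simp
  | insert a s ha ih =>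
    rw [← prod_fn] at ih ⊢
    rw [prod_insert ha, mul_comm]
    exact (hZ.indepFun_finsetProd_of_notMem₀ (fun i => (hint i).aemeasurable) ha).integrable_mul
      ih (hint a)

theorem ProbabilityTheory.iIndepFun.integral_fun_finsetProd_eq_prod_integral
    (hZ : iIndepFun Z μ) (hZm : ∀ i, AEStronglyMeasurable (Z i) μ) (s : Finset ι) :
    ∫ ω, ∏ i ∈ s, Z i ω ∂μ = ∏ i ∈ s, ∫ ω, Z i ω ∂μ := by
  simp_rw [← prod_coe_sort s]
  exact (hZ.precomp Subtype.val_injective).integral_fun_prod_eq_prod_integral fun i => hZm i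

end Independence

section Moments

variable {Ω ι : Type*} [MeasurableSpace Ω] {μ : Measure Ω} {X : Ω → ℝ} {Z : ι → Ω → ℝ}

theorem integrable_degFall (hX : AEStronglyMeasurable X μ)
    (hmom : ∀ p : ℕ, Integrable (fun ω => |X ω| ^ p) μ) (lam : ℝ) (n : ℕ) :
    Integrable (fun ω => degFall lam (X ω) n) μ := by
  set P : Polynomial ℝ := ∏ i ∈ range n, (Polynomial.X - Polynomial.C (i * lam))
  have hP : ∀ x, degFall lam x n = ∑ p ∈ range (P.natDegree + 1), P.coeff p * x ^ p := fun x => by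
    rw [← Polynomial.eval_eq_sum_range, Polynomial.eval_prod]
    simp [degFall]
  simp_rw [hP]
  refine integrable_finsetSum _ fun p _ => Integrable.const_mul ?_ _
  exact (hmom p).mono' (hX.pow p) (.of_forall fun ω => by simp)

theorem iIndepFun_degFall (hZ : iIndepFun Z μ) (lam : ℝ) (t : ι → ℕ) :
    iIndepFun (fun i ω => degFall lam (Z i ω) (t i)) μ :=
  hZ.comp _ fun i => measurable_degFall lam (t i)

theorem integral_prod_degFall (hZ : iIndepFun Z μ) (hident : ∀ i, IdentDistrib (Z i) X μ μ)
    (lam : ℝ) (s : Finset ι) (t : ι → ℕ) :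
    ∫ ω, ∏ i ∈ s, degFall lam (Z i ω) (t i) ∂μ = ∏ i ∈ s, ∫ ω, degFall lam (X ω) (t i) ∂μ := by
  rw [(iIndepFun_degFall hZ lam t).integral_fun_finsetProd_eq_prod_integral
    fun i => ((measurable_degFall lam (t i)).comp_aemeasurable
      (hident i).aemeasurable_fst).aestronglyMeasurable]
  exact prod_congr rfl fun i _ => ((hident i).comp (measurable_degFall lam (t i))).integral_eq

theorem integral_degFall_sum [DecidableEq ι] (hZ : iIndepFun Z μ)
    (hident : ∀ i, IdentDistrib (Z i) X μ μ)
    (hmom : ∀ p : ℕ, Integrable (fun ω => |X ω| ^ p) μ) (lam : ℝ) (s : Finset ι) (n : ℕ) :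
    ∫ ω, degFall lam (∑ i ∈ s, Z i ω) n ∂μ =
      n.factorial * coeff n (egf (fun m => ∫ ω, degFall lam (X ω) m ∂μ) ^ s.card) := by
  have hint : ∀ i m, Integrable (fun ω => degFall lam (Z i ω) m) μ := fun i m =>
    ((hident i).comp (measurable_degFall lam m)).integrable_iff.mpr
      (integrable_degFall (hident i).aemeasurable_snd.aestronglyMeasurable hmom lam m)
  simp_rw [degFall_sum]
  rw [integral_finsetSum _ fun t _ =>
    ((iIndepFun_degFall hZ lam t).integrable_fun_finsetProd (fun i => hint i (t i)) s).const_mul _]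
  simp_rw [integral_const_mul, integral_prod_degFall hZ hident]
  rw [← prod_const, factorial_mul_coeff_prod_egf]

end Moments

theorem probDegStirling_multinomial_general {Ω : Type*} [MeasurableSpace Ω] (μ : Measure Ω)
    (Y : ℕ → Ω → ℝ)
    (hindep : iIndepFun Y μ)
    (hident : ∀ i, IdentDistrib (Y i) (Y 0) μ μ)
    (hmom : ∀ n : ℕ, Integrable (fun ω => |Y 0 ω| ^ n) μ)
    (lam : ℝ) (n k : ℕ) :
    probDegStirling μ Y lam n k =
      (1 / (Nat.factorial k : ℝ)) *
        ∑ t ∈ (Finset.Nat.antidiagonalTuple k n).filter (fun t => ∀ i, 0 < t i),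
          (Nat.multinomial Finset.univ t : ℝ) *
            ∫ ω, ∏ i : Fin k, degFall lam (Y (i : ℕ) ω) (t i) ∂μ := by
  have := hindep.isProbabilityMeasure
  set g : ℕ → ℝ := fun m => ∫ ω, degFall lam (Y 0 ω) m ∂μ
  have hg0 : g 0 = 1 := by simp [g, degFall]
  have hsum (j : ℕ) :
      ∫ ω, degFall lam (∑ i ∈ range j, Y i ω) n ∂μ = n.factorial * coeff n (egf g ^ j) := by
    simpa using integral_degFall_sum hindep hident hmom lam (range j) n
  have hprod (t : Fin k → ℕ) :
      ∫ ω, ∏ i : Fin k, degFall lam (Y i ω) (t i) ∂μ = ∏ i, g (t i) :=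
    integral_prod_degFall (hindep.precomp Fin.val_injective) (fun i => hident i) lam univ t
  simp_rw [probDegStirling, hsum, hprod, ← factorial_mul_coeff_egf_sub_one_pow hg0,
    sub_one_pow_eq_sum_smul (R := ℝ), map_sum, coeff_smul, smul_eq_mul, mul_sum]
  exact sum_congr rfl fun j _ => by ring

/-- Multinomial representation of the probabilistic degenerate Stirling numbers of the
second kind: the sum ranges over all `k`-tuples of positive integers summing to `n`. -/
theorem probDegStirling_multinomial {Ω : Type*} [MeasurableSpace Ω] (μ : Measure Ω)
    [IsProbabilityMeasure μ] (Y : ℕ → Ω → ℝ)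
    (hmeas : ∀ i, Measurable (Y i))
    (hindep : iIndepFun Y μ)
    (hident : ∀ i, IdentDistrib (Y i) (Y 0) μ μ)
    (hmom : ∀ n : ℕ, Integrable (fun ω => |Y 0 ω| ^ n) μ)
    (lam : ℝ) (n k : ℕ) (hkn : k ≤ n) :
    probDegStirling μ Y lam n k =
      (1 / (Nat.factorial k : ℝ)) *
        ∑ t ∈ (Finset.Nat.antidiagonalTuple k n).filter (fun t => ∀ i, 0 < t i),
          (Nat.multinomial Finset.univ t : ℝ) *
            ∫ ω, ∏ i : Fin k, degFall lam (Y (i : ℕ) ω) (t i) ∂μ :=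
  probDegStirling_multinomial_general μ Y hindep hident hmom lam n k
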